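/- For every real δ, ∫_ℝ l·Q(δ,l) dl = (1/4)(8 + 4δ − e^{δ}(5 − 2δ)) if δ < 0, and (1/4)(4 − e^{−δ}) if δ ≥ 0, where Q(δ,l) is the density e^{−l}e^{δ}(l−δ) for l<0, δ≤l; e^{−l}e^{−(l−δ)}(1+2(l−δ)) for l≥0, δ≤l; e^{−l} for l≥0, δ>l; and 0 otherwise. -/

import Mathlib

/-!
The integrand `l * Qden δ l` vanishes for `l < min δ 0`, equals a quadratic in `l` times `e^{-l}`
on `[min δ 0, max δ 0]`, and a quadratic times `e^{δ - 2l}` beyond `max δ 0`. Every such piece has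
an explicit primitive `-(A l² + B l + C) e^{-r l}`, which tends to `0` at `+∞`, so all three
integrals are evaluated by the fundamental theorem of calculus.
-/

open Real MeasureTheory

/-- The density of `min{X, δ+Y+Z}`. -/
noncomputable def Qden (δ l : ℝ) : ℝ :=
  if l < 0 then (if δ ≤ l then exp (-l) * exp δ * (l - δ) else 0)
  else if δ ≤ l then exp (-l) * exp (-(l - δ)) * (1 + 2 * (l - δ))
  else exp (-l)

open Set Filter Asymptotics

section ExpMulQuadratic

variable {r : ℝ}

theorem isLittleO_quadratic_exp_mul_atTop (hr : 0 < r) (a b c : ℝ) :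
    (fun x : ℝ => a * x ^ 2 + b * x + c) =o[atTop] fun x => exp (r * x) := by
  have h := (((isLittleO_pow_exp_pos_mul_atTop 2 hr).const_mul_left a).add
    ((isLittleO_pow_exp_pos_mul_atTop 1 hr).const_mul_left b)).add
    ((isLittleO_pow_exp_pos_mul_atTop 0 hr).const_mul_left c)
  simpa only [pow_one, pow_zero, mul_one] using h

theorem tendsto_quadratic_mul_exp_neg_mul_atTop (hr : 0 < r) (a b c : ℝ) :
    Tendsto (fun x : ℝ => (a * x ^ 2 + b * x + c) * exp (-(r * x))) atTop (nhds 0) :=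
  ((isLittleO_quadratic_exp_mul_atTop hr a b c).tendsto_div_nhds_zero).congr
    fun x => by rw [exp_neg, div_eq_mul_inv]

theorem integrableOn_Ioi_quadratic_mul_exp_neg_mul (hr : 0 < r) (a b c d : ℝ) :
    IntegrableOn (fun x : ℝ => (a * x ^ 2 + b * x + c) * exp (-(r * x))) (Ioi d) := by
  refine integrable_of_isBigO_exp_neg (half_pos hr) (by fun_prop) ?_
  refine ((isLittleO_quadratic_exp_mul_atTop (half_pos hr) a b c).isBigO.mul
    (isBigO_refl (fun x => exp (-(r * x))) atTop)).congr_right fun x => ?_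
  rw [← exp_add]
  ring_nf

/- Integrands of the form `q(x) e^{-r x}` are written through the coefficients of their primitive
`-(A x² + B x + C) e^{-r x}`, so that no division by `r` occurs. -/
theorem hasDerivAt_neg_quadratic_mul_exp_neg_mul (r A B C x : ℝ) :
    HasDerivAt (fun x => -((A * x ^ 2 + B * x + C) * exp (-(r * x))))
      ((r * A * x ^ 2 + (r * B - 2 * A) * x + (r * C - B)) * exp (-(r * x))) x := by
  have hp : HasDerivAt (fun x => A * x ^ 2 + B * x + C) (A * (2 * x) + B) x := by
    simpa using
      (((hasDerivAt_pow 2 x).const_mul A).add ((hasDerivAt_id x).const_mul B)).add_const C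
  have he : HasDerivAt (fun x => exp (-(r * x))) (exp (-(r * x)) * -r) x := by
    simpa using ((hasDerivAt_id x).const_mul r).neg.exp
  exact (hp.mul he).neg.congr_deriv (by ring)

theorem integral_quadratic_mul_exp_neg_mul (r A B C u v : ℝ) :
    ∫ x in u..v, (r * A * x ^ 2 + (r * B - 2 * A) * x + (r * C - B)) * exp (-(r * x)) =
      (A * u ^ 2 + B * u + C) * exp (-(r * u)) - (A * v ^ 2 + B * v + C) * exp (-(r * v)) := by
  rw [intervalIntegral.integral_eq_sub_of_hasDerivAt
    (fun x _ => hasDerivAt_neg_quadratic_mul_exp_neg_mul r A B C x)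
    (by apply Continuous.intervalIntegrable; fun_prop)]
  ring

theorem integral_Ioi_quadratic_mul_exp_neg_mul (hr : 0 < r) (A B C d : ℝ) :
    ∫ x in Ioi d, (r * A * x ^ 2 + (r * B - 2 * A) * x + (r * C - B)) * exp (-(r * x)) =
      (A * d ^ 2 + B * d + C) * exp (-(r * d)) := by
  rw [integral_Ioi_of_hasDerivAt_of_tendsto'
    (fun x _ => hasDerivAt_neg_quadratic_mul_exp_neg_mul r A B C x)
    (integrableOn_Ioi_quadratic_mul_exp_neg_mul hr _ _ _ d)
    (by simpa using (tendsto_quadratic_mul_exp_neg_mul_atTop hr A B C).neg)]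
  ring

end ExpMulQuadratic

theorem integral_eq_intervalIntegral_add_integral_Ioi {E : Type*} [NormedAddCommGroup E]
    [NormedSpace ℝ E] {f : ℝ → E} {a b : ℝ} (hab : a ≤ b) (hf : ∀ x < a, f x = 0)
    (hfab : IntervalIntegrable f volume a b) (hfb : IntegrableOn f (Ioi b)) :
    ∫ x, f x = (∫ x in a..b, f x) + ∫ x in Ioi b, f x := by
  have hind : (Ici a).indicator f = f := by
    refine indicator_eq_self.2 fun x hx => ?_
    by_contra hxa
    exact hx (hf x (not_le.1 hxa))
  rw [← hind, integral_indicator measurableSet_Ici, integral_Ici_eq_integral_Ioi, hind,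
    ← Ioc_union_Ioi_eq_Ioi hab, setIntegral_union Ioc_disjoint_Ioi_same measurableSet_Ioi
      ((intervalIntegrable_iff_integrableOn_Ioc_of_le hab).1 hfab) hfb,
    intervalIntegral.integral_of_le hab]

section Qden

variable {δ l : ℝ}

theorem Qden_of_lt_min (h : l < min δ 0) : Qden δ l = 0 := by
  simp [Qden, (lt_min_iff.1 h).2, (lt_min_iff.1 h).1]

theorem mul_Qden_of_le_of_nonpos (hδ : δ ≤ l) (hl : l ≤ 0) :
    l * Qden δ l = (l ^ 2 - δ * l) * exp δ * exp (-l) := by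
  rcases hl.lt_or_eq with hl | rfl
  · simp only [Qden, if_pos hl, if_pos hδ]
    ring
  · simp

theorem Qden_of_nonneg_of_le (hl : 0 ≤ l) (hδ : l ≤ δ) : Qden δ l = exp (-l) := by
  rcases hδ.lt_or_eq with hδ | rfl
  · simp [Qden, not_lt.2 hl, not_le.2 hδ]
  · simp [Qden, not_lt.2 hl]

theorem Qden_of_max_le (h : max δ 0 ≤ l) :
    Qden δ l = exp δ * exp (-(2 * l)) * (1 + 2 * (l - δ)) := by
  simp only [Qden, if_neg (not_lt.2 (le_of_max_le_right h)), if_pos (le_of_max_le_left h),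
    ← exp_add]
  ring_nf

theorem intervalIntegrable_mul_Qden_of_nonpos (hδ : δ ≤ 0) :
    IntervalIntegrable (fun l => l * Qden δ l) volume δ 0 := by
  refine ContinuousOn.intervalIntegrable ?_
  refine (Continuous.continuousOn (f := fun l => (l ^ 2 - δ * l) * exp δ * exp (-l))
    (by fun_prop)).congr fun l hl => ?_
  rw [uIcc_of_le hδ] at hl
  exact mul_Qden_of_le_of_nonpos hl.1 hl.2

theorem intervalIntegral_mul_Qden_of_nonpos (hδ : δ ≤ 0) :
    ∫ l in δ..0, l * Qden δ l = δ + 2 - (2 - δ) * exp δ := by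
  convert integral_quadratic_mul_exp_neg_mul 1 (exp δ) ((2 - δ) * exp δ) ((2 - δ) * exp δ)
    δ 0 using 1
  · refine intervalIntegral.integral_congr fun l hl => ?_
    rw [uIcc_of_le hδ] at hl
    simp only [mul_Qden_of_le_of_nonpos hl.1 hl.2, one_mul]
    ring
  · simp only [mul_zero, neg_zero, exp_zero, exp_neg]
    field_simp
    ring

theorem intervalIntegrable_mul_Qden_of_nonneg (hδ : 0 ≤ δ) :
    IntervalIntegrable (fun l => l * Qden δ l) volume 0 δ := by
  refine ContinuousOn.intervalIntegrable ?_
  refine (Continuous.continuousOn (f := fun l => l * exp (-l)) (by fun_prop)).congr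
    fun l hl => ?_
  rw [uIcc_of_le hδ] at hl
  simp only [Qden_of_nonneg_of_le hl.1 hl.2]

theorem intervalIntegral_mul_Qden_of_nonneg (hδ : 0 ≤ δ) :
    ∫ l in 0..δ, l * Qden δ l = 1 - (δ + 1) * exp (-δ) := by
  convert integral_quadratic_mul_exp_neg_mul 1 0 1 1 0 δ using 1
  · refine intervalIntegral.integral_congr fun l hl => ?_
    rw [uIcc_of_le hδ] at hl
    simp only [Qden_of_nonneg_of_le hl.1 hl.2, one_mul]
    ring
  · simp

theorem integrableOn_Ioi_mul_Qden {m : ℝ} (hm : max δ 0 ≤ m) :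
    IntegrableOn (fun l => l * Qden δ l) (Ioi m) := by
  refine (integrableOn_Ioi_quadratic_mul_exp_neg_mul two_pos (2 * exp δ)
    ((1 - 2 * δ) * exp δ) 0 m).congr_fun (fun l hl => ?_) measurableSet_Ioi
  rw [Qden_of_max_le (hm.trans (le_of_lt hl))]
  ring

theorem integral_Ioi_mul_Qden {m : ℝ} (hm : max δ 0 ≤ m) :
    ∫ l in Ioi m, l * Qden δ l =
      (m ^ 2 + (3 - 2 * δ) / 2 * m + (3 - 2 * δ) / 4) * exp δ * exp (-(2 * m)) := by
  convert integral_Ioi_quadratic_mul_exp_neg_mul two_pos (exp δ) ((3 - 2 * δ) / 2 * exp δ)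
    ((3 - 2 * δ) / 4 * exp δ) m using 1
  · refine setIntegral_congr_fun measurableSet_Ioi fun l hl => ?_
    rw [Qden_of_max_le (hm.trans (le_of_lt hl))]
    ring
  · ring

end Qden

/-- The first moment of the density `Q(δ,·)`. -/
theorem integral_mul_Qden (δ : ℝ) :
    (δ < 0 → ∫ l : ℝ, l * Qden δ l = (1 / 4) * (8 + 4 * δ - exp δ * (5 - 2 * δ))) ∧
    (0 ≤ δ → ∫ l : ℝ, l * Qden δ l = (1 / 4) * (4 - exp (-δ))) := by
  refine ⟨fun hδ => ?_, fun hδ => ?_⟩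
  · have hmax : max δ 0 ≤ 0 := max_le hδ.le le_rfl
    rw [integral_eq_intervalIntegral_add_integral_Ioi hδ.le
      (fun l hl => Qden_of_lt_min (lt_min hl (hl.trans hδ)) ▸ mul_zero l)
      (intervalIntegrable_mul_Qden_of_nonpos hδ.le) (integrableOn_Ioi_mul_Qden hmax),
      intervalIntegral_mul_Qden_of_nonpos hδ.le, integral_Ioi_mul_Qden hmax]
    simp only [mul_zero, neg_zero, exp_zero]
    ring
  · have hmax : max δ 0 ≤ δ := max_le le_rfl hδ
    rw [integral_eq_intervalIntegral_add_integral_Ioi hδ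
      (fun l hl => Qden_of_lt_min (lt_min (hl.trans_le hδ) hl) ▸ mul_zero l)
      (intervalIntegrable_mul_Qden_of_nonneg hδ) (integrableOn_Ioi_mul_Qden hmax),
      intervalIntegral_mul_Qden_of_nonneg hδ, integral_Ioi_mul_Qden hmax]
    have hexp : exp δ * exp (-(2 * δ)) = exp (-δ) := by rw [← exp_add]; ring_nf
    linear_combination (δ ^ 2 + (3 - 2 * δ) / 2 * δ + (3 - 2 * δ) / 4) * hexp
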